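/- arXiv:1608.04544 — 5 statements merged into one kernel-verified Lean document; each statement's English description precedes it below -/
import Mathlib

section
/- NFL holds for a problem distribution P if and only if for every pair of optimisers a, b and every result vector R ∈ Y^n one has P_a(R) = P_b(R). -/
namespace NFL

/-- A (deterministic) optimiser on search space `Fin n` and range `Y`:
it assigns to every trace (list of pairs with pairwise distinct first
components) of length `< n` a next, unvisited search point. -/
structure Optimiser (n : ℕ) (Y : Type*) where
  next : List (Fin n × Y) → Fin n
  valid : ∀ T : List (Fin n × Y), T.length < n → (T.map Prod.fst).Nodup →
    next T ∉ T.map Prod.fst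

variable {n : ℕ} {Y : Type*}

/-- The trace generated after `k` steps by running optimiser `a`
on target function `f`, starting from the empty trace. -/
def runFrom (a : Optimiser n Y) (f : Fin n → Y) : ℕ → List (Fin n × Y)
  | 0 => []
  | k + 1 =>
      runFrom a f k ++ [(a.next (runFrom a f k), f (a.next (runFrom a f k)))]

/-- The result vector `T^y(a,f)`: its `i`-th entry (0-indexed) is the value
observed at step `i+1`, i.e. `f` applied to the point probed after `i` steps. -/
def resVec (a : Optimiser n Y) (f : Fin n → Y) (i : Fin n) : Y :=
  f (a.next (runFrom a f (i : ℕ)))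

/-- A problem distribution: a probability distribution on `Y^X`. -/
def IsProbDist [Fintype Y] (P : (Fin n → Y) → ℝ) : Prop :=
  (∀ f, 0 ≤ P f) ∧ ∑ f, P f = 1

/-- `P_a(R)`: the probability that optimiser `a` produces result vector `R`. -/
def resProb [Fintype Y] [DecidableEq Y] (P : (Fin n → Y) → ℝ)
    (a : Optimiser n Y) (R : Fin n → Y) : ℝ :=
  ∑ f ∈ Finset.univ.filter (fun f => resVec a f = R), P f

/-- Expected performance `M^P(a)` of optimiser `a` under distribution `P`
and performance measure `M`. -/
def perf [Fintype Y] (P : (Fin n → Y) → ℝ) (M : (Fin n → Y) → ℝ)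
    (a : Optimiser n Y) : ℝ :=
  ∑ f, P f * M (resVec a f)

/-- NFL holds for `P`: all optimisers have the same expected performance
under every (nonnegative) performance measure. -/
def NFLholds [Fintype Y] (P : (Fin n → Y) → ℝ) : Prop :=
  ∀ M : (Fin n → Y) → ℝ, (∀ R, 0 ≤ M R) →
    ∀ a b : Optimiser n Y, perf P M a = perf P M b

/-- The histogram of `f`: `h_f(y) = |f⁻¹(y)|`. -/
def histogram [DecidableEq Y] (f : Fin n → Y) (y : Y) : ℕ :=
  (Finset.univ.filter fun x => f x = y).card

/-- `P` is block uniform: functions with equal histograms get equal probability. -/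
def BlockUniform [DecidableEq Y] (P : (Fin n → Y) → ℝ) : Prop :=
  ∀ f g : Fin n → Y, histogram f = histogram g → P f = P g

/-- `F` is closed under permutation: `f ∈ F` implies `σf ∈ F`,
where `(σf)(x) = f(σ⁻¹(x))`. -/
def Cup [Fintype Y] [DecidableEq Y] (F : Finset (Fin n → Y)) : Prop :=
  ∀ f ∈ F, ∀ σ : Equiv.Perm (Fin n), (f ∘ σ.symm) ∈ F

/-- The uniform distribution on a class `F`. -/
noncomputable def uniformOn [Fintype Y] [DecidableEq Y] (F : Finset (Fin n → Y))
    (f : Fin n → Y) : ℝ :=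
  if f ∈ F then 1 / F.card else 0

/-- An optimiser is non-adaptive if it probes the points of `X` in a fixed
order, regardless of the observed values. -/
def NonAdaptive (a : Optimiser n Y) : Prop :=
  ∃ ord : Fin n → Fin n,
    ∀ (f : Fin n → Y) (i : Fin n), a.next (runFrom a f (i : ℕ)) = ord i

/-- Optimisation time `M_ptm(R)`: the least index `i` (counting from 1) with
`R[i] = yMax`, with the convention `M_ptm(R) = n` if no such index exists. -/
def mptm [DecidableEq Y] (yMax : Y) (R : Fin n → Y) : ℕ :=
  if h : ∃ i, R i = yMax then
    ((Finset.univ.filter fun i => R i = yMax).min'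
      ⟨h.choose, Finset.mem_filter.mpr ⟨Finset.mem_univ _, h.choose_spec⟩⟩).val + 1
  else n

section ResultDistribution

variable [Fintype Y] [DecidableEq Y]

theorem perf_eq_sum_resProb (P M : (Fin n → Y) → ℝ) (a : Optimiser n Y) :
    perf P M a = ∑ R, resProb P a R * M R := by
  simp only [perf, resProb, Finset.sum_mul]
  rw [← Finset.sum_fiberwise Finset.univ (resVec a) fun f => P f * M (resVec a f)]
  refine Finset.sum_congr rfl fun R _ => Finset.sum_congr rfl fun f hf => ?_
  rw [(Finset.mem_filter.mp hf).2]

theorem perf_indicator_eq_resProb (P : (Fin n → Y) → ℝ) (a : Optimiser n Y)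
    (R : Fin n → Y) : perf P (fun S => if S = R then 1 else 0) a = resProb P a R := by
  simp [perf_eq_sum_resProb]

end ResultDistribution

theorem nfl_iff_resProb_eq_general {n : ℕ} {Y : Type*} [Fintype Y] [DecidableEq Y]
    (P : (Fin n → Y) → ℝ) :
    NFLholds P ↔
      ∀ (a b : Optimiser n Y) (R : Fin n → Y), resProb P a R = resProb P b R := by
  constructor
  · intro hNFL a b R
    have hM : ∀ S : Fin n → Y, 0 ≤ if S = R then (1 : ℝ) else 0 := fun S => by
      split_ifs <;> norm_num
    simpa only [perf_indicator_eq_resProb] using hNFL _ hM a b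
  · intro hEq M _ a b
    simp only [perf_eq_sum_resProb, hEq a b]

theorem nfl_iff_resProb_eq {n : ℕ} {Y : Type*} [Fintype Y] [DecidableEq Y]
    (hn : 1 ≤ n) (hY : 2 ≤ Fintype.card Y)
    (P : (Fin n → Y) → ℝ) (hP : IsProbDist P) :
    NFLholds P ↔
      ∀ (a b : Optimiser n Y) (R : Fin n → Y), resProb P a R = resProb P b R :=
  nfl_iff_resProb_eq_general P

end NFL
end

section
/- NFL holds for a problem distribution P if and only if P is block uniform. -/
namespace NFL

variable {n : ℕ} {Y : Type*}

/-
A run of an optimiser `a` on `f` probes the points in an order `probe a f` that is a permutation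
of `X`, so the result vector `f ∘ probe a f` has the histogram of `f`; moreover `f` is recovered
from its result vector, since the run is determined step by step by the values observed. Hence
`f ↦ T^y(a, f)` is a histogram-preserving bijection of `Y^X`, and under a block uniform `P` every
optimiser has the expected performance `∑ R, P R * M R`. Conversely, if `g ∘ σ = f`, the
optimiser probing in the fixed order `σ` turns `g` into the result vector `f`, while the one
probing in the order of `X` turns `f` into `f`; testing NFL with the indicator of `{f}` as
performance measure gives `P g = P f`.
-/

def probe (a : Optimiser n Y) (f : Fin n → Y) (i : Fin n) : Fin n :=
  a.next (runFrom a f i)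

lemma resVec_eq_comp_probe (a : Optimiser n Y) (f : Fin n → Y) :
    resVec a f = f ∘ probe a f := rfl

lemma runFrom_length (a : Optimiser n Y) (f : Fin n → Y) (k : ℕ) :
    (runFrom a f k).length = k := by
  induction k with
  | zero => rfl
  | succ k ih => simp [runFrom, ih]

lemma runFrom_map_fst (a : Optimiser n Y) (f : Fin n → Y) (k : ℕ) :
    (runFrom a f k).map Prod.fst = List.ofFn fun i : Fin k => a.next (runFrom a f i) := by
  induction k with
  | zero => rfl
  | succ k ih =>
    rw [runFrom, List.map_append, ih, List.ofFn_succ_last]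
    rfl

lemma runFrom_map_fst_nodup (a : Optimiser n Y) (f : Fin n → Y) {k : ℕ} (hk : k ≤ n) :
    ((runFrom a f k).map Prod.fst).Nodup := by
  induction k with
  | zero => simp [runFrom]
  | succ k ih =>
    have hvisited := ih (by omega)
    have hnew := a.valid _ (by rw [runFrom_length]; omega) hvisited
    simp only [runFrom, List.map_append, List.map_cons, List.map_nil]
    exact hvisited.append (List.nodup_singleton _) (List.disjoint_singleton.mpr hnew)

lemma probe_bijective (a : Optimiser n Y) (f : Fin n → Y) : Function.Bijective (probe a f) := by
  have hnodup := runFrom_map_fst_nodup a f le_rfl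
  rw [runFrom_map_fst] at hnodup
  exact Finite.injective_iff_bijective.mp (List.nodup_ofFn.mp hnodup)

lemma histogram_eq_iff [DecidableEq Y] {f g : Fin n → Y} :
    histogram f = histogram g ↔ ∃ σ : Equiv.Perm (Fin n), g ∘ σ = f := by
  constructor
  · intro h
    have hcard (y : Y) : Fintype.card {x // f x = y} = Fintype.card {x // g x = y} := by
      simpa only [histogram, Fintype.card_subtype] using congrFun h y
    let e (y : Y) := Fintype.equivOfCardEq (hcard y)
    exact ⟨(Equiv.sigmaFiberEquiv f).symm.trans
        ((Equiv.sigmaCongrRight e).trans (Equiv.sigmaFiberEquiv g)),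
      funext fun x => (e (f x) ⟨x, rfl⟩).2⟩
  · rintro ⟨σ, rfl⟩
    funext y
    exact Finset.card_equiv σ (by simp)

lemma histogram_resVec [DecidableEq Y] (a : Optimiser n Y) (f : Fin n → Y) :
    histogram (resVec a f) = histogram f :=
  histogram_eq_iff.mpr ⟨Equiv.ofBijective _ (probe_bijective a f), rfl⟩

lemma runFrom_eq_of_resVec_eq (a : Optimiser n Y) {f g : Fin n → Y}
    (h : resVec a f = resVec a g) {k : ℕ} (hk : k ≤ n) : runFrom a f k = runFrom a g k := by
  induction k with
  | zero => rfl
  | succ k ih =>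
    have hrun := ih (by omega)
    have hval : f (a.next (runFrom a f k)) = g (a.next (runFrom a g k)) := congrFun h ⟨k, hk⟩
    rw [hrun] at hval
    simp only [runFrom, hrun, hval]

lemma resVec_injective (a : Optimiser n Y) : Function.Injective (resVec a) := by
  intro f g h
  have hprobe : probe a f = probe a g :=
    funext fun i => by simp only [probe, runFrom_eq_of_resVec_eq a h i.isLt.le]
  funext x
  obtain ⟨i, rfl⟩ := (probe_bijective a f).2 x
  calc f (probe a f i) = resVec a f i := rfl
    _ = resVec a g i := congrFun h i
    _ = g (probe a f i) := by rw [hprobe]; rfl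

lemma perf_eq_of_blockUniform [Fintype Y] [DecidableEq Y] {P : (Fin n → Y) → ℝ}
    (hP : BlockUniform P) (M : (Fin n → Y) → ℝ) (a : Optimiser n Y) :
    perf P M a = ∑ R, P R * M R :=
  calc perf P M a = ∑ f, P (resVec a f) * M (resVec a f) :=
        Finset.sum_congr rfl fun f _ => by rw [hP _ _ (histogram_resVec a f)]
    _ = ∑ R, P R * M R :=
        (Finite.injective_iff_bijective.mp (resVec_injective a)).sum_comp fun R => P R * M R

/-- The optimiser probing `σ 0, σ 1, …`; on traces that this order does not produce it falls back
to an arbitrary unvisited point. -/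
noncomputable def Optimiser.ofPerm (hn : 0 < n) (σ : Equiv.Perm (Fin n)) : Optimiser n Y where
  next T :=
    if h : T.length < n then
      if σ ⟨T.length, h⟩ ∈ T.map Prod.fst then
        @Classical.epsilon _ ⟨σ ⟨T.length, h⟩⟩ (· ∉ T.map Prod.fst)
      else σ ⟨T.length, h⟩
    else ⟨0, hn⟩
  valid T hT _ := by
    rw [dif_pos hT]
    split_ifs with hmem
    · refine Classical.epsilon_spec (p := (· ∉ T.map Prod.fst)) ?_
      by_contra! hall
      have hcover : Finset.univ ⊆ (T.map Prod.fst).toFinset := fun x _ => by simpa using hall x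
      have hle := (Finset.card_le_card hcover).trans (List.toFinset_card_le _)
      rw [Finset.card_univ, Fintype.card_fin, List.length_map] at hle
      omega
    · exact hmem

lemma Optimiser.ofPerm_next (hn : 0 < n) (σ : Equiv.Perm (Fin n)) {T : List (Fin n × Y)} {k : ℕ}
    (hlen : T.length = k) (hk : k < n) (hfresh : σ ⟨k, hk⟩ ∉ T.map Prod.fst) :
    (Optimiser.ofPerm hn σ).next T = σ ⟨k, hk⟩ := by
  subst hlen
  simp only [Optimiser.ofPerm, dif_pos hk, if_neg hfresh]

lemma probe_ofPerm (hn : 0 < n) (σ : Equiv.Perm (Fin n)) (f : Fin n → Y) :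
    probe (Optimiser.ofPerm hn σ) f = σ := by
  suffices h : ∀ k (hk : k < n), (Optimiser.ofPerm hn σ).next
      (runFrom (Optimiser.ofPerm hn σ) f k) = σ ⟨k, hk⟩ from funext fun i => h i i.isLt
  intro k
  induction k using Nat.strong_induction_on with
  | _ k ih =>
    intro hk
    refine Optimiser.ofPerm_next hn σ (runFrom_length _ f k) hk ?_
    simp only [runFrom_map_fst, List.mem_ofFn, not_exists]
    intro i hi
    rw [ih i i.isLt (i.isLt.trans hk), σ.apply_eq_iff_eq, Fin.mk.injEq] at hi
    exact i.isLt.ne hi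

lemma perf_ite_eq_ofPerm [Fintype Y] [DecidableEq Y] (P : (Fin n → Y) → ℝ) (hn : 0 < n)
    (σ : Equiv.Perm (Fin n)) (f : Fin n → Y) :
    perf P (fun R => if R = f then 1 else 0) (Optimiser.ofPerm hn σ) = P (f ∘ σ.symm) := by
  simp only [perf, resVec_eq_comp_probe, probe_ofPerm, mul_ite, mul_one, mul_zero,
    ← Equiv.eq_comp_symm]
  exact Fintype.sum_ite_eq' _ _

theorem nfl_iff_blockUniform_general {n : ℕ} {Y : Type*} [Fintype Y] [DecidableEq Y]
    (hn : 1 ≤ n)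
    (P : (Fin n → Y) → ℝ) :
    NFLholds P ↔ BlockUniform P := by
  refine ⟨fun hNFL f g hfg => ?_, fun hP M _ a b => by
    rw [perf_eq_of_blockUniform hP, perf_eq_of_blockUniform hP]⟩
  obtain ⟨σ, rfl⟩ := histogram_eq_iff.mp hfg
  have hperf := hNFL (fun R => if R = g ∘ σ then 1 else 0) (fun R => by positivity)
    (Optimiser.ofPerm hn (Equiv.refl _)) (Optimiser.ofPerm hn σ)
  simpa [perf_ite_eq_ofPerm, Function.comp_assoc] using hperf

theorem nfl_iff_blockUniform {n : ℕ} {Y : Type*} [Fintype Y] [DecidableEq Y]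
    (hn : 1 ≤ n) (hY : 2 ≤ Fintype.card Y)
    (P : (Fin n → Y) → ℝ) (hP : IsProbDist P) :
    NFLholds P ↔ BlockUniform P :=
  nfl_iff_blockUniform_general hn P

end NFL
end

section
/- Let F ⊆ Y^X be a nonempty class of functions. NFL holds for the uniform distribution u_F if and only if F is closed under permutation (c.u.p.). -/
/-!
Running an optimiser `a` on `f` probes every point exactly once, so its result vector is
`f ∘ π` for a permutation `π` depending on `f`; moreover `f` can be reconstructed from its
result vector, so `f ↦ T^y(a, f)` is a bijection of `Y^X`. If `P` is invariant under
permutations of `X` this bijection preserves `P`, whence `M^P(a) = ∑_R P(R) M(R)` for every `a`.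
Conversely, relabelling the points of `X` by `σ` turns `a` into an optimiser `a^σ` with
`T^y(a^σ, f) = T^y(a, f ∘ σ)`; comparing `a` and `a^σ` on the indicator of a single result
vector shows `P(f ∘ σ⁻¹) = P(f)`. For `P = u_F`, permutation invariance is exactly c.u.p.
-/

namespace NFL

variable {n : ℕ} {Y : Type*}

namespace Optimiser

def probe (a : Optimiser n Y) (f : Fin n → Y) (k : ℕ) : Fin n :=
  a.next (runFrom a f k)

variable (a : Optimiser n Y) (f : Fin n → Y)

theorem runFrom_eq_map_range (k : ℕ) :
    runFrom a f k = (List.range k).map fun i => (a.probe f i, f (a.probe f i)) := by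
  induction k with
  | zero => rfl
  | succ k ih => simp [runFrom, List.range_succ, ih, probe]

theorem nodup_map_probe_range {k : ℕ} (hk : k ≤ n) :
    ((List.range k).map (a.probe f)).Nodup := by
  induction k with
  | zero => simp
  | succ k ih =>
    have hfst : (runFrom a f k).map Prod.fst = (List.range k).map (a.probe f) := by
      simp [runFrom_eq_map_range, Function.comp_def]
    have hfresh := a.valid (runFrom a f k) (by simp [runFrom_eq_map_range]; omega)
      (hfst ▸ ih (by omega))
    rw [hfst] at hfresh
    simpa [List.range_succ, List.nodup_append, probe] using
      ⟨ih (by omega), fun i hi h => hfresh (List.mem_map.2 ⟨i, List.mem_range.2 hi, h⟩)⟩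

theorem probe_injective : Function.Injective fun i : Fin n => a.probe f i := fun i j h =>
  Fin.ext <| List.inj_on_of_nodup_map (a.nodup_map_probe_range f le_rfl)
    (List.mem_range.2 i.isLt) (List.mem_range.2 j.isLt) h

noncomputable def probePerm : Equiv.Perm (Fin n) :=
  Equiv.ofBijective _ (Finite.injective_iff_bijective.1 (a.probe_injective f))

theorem resVec_eq_comp_probePerm : resVec a f = f ∘ a.probePerm f := rfl

theorem runFrom_eq_of_resVec_eq {g : Fin n → Y} (h : resVec a f = resVec a g) :
    ∀ k ≤ n, runFrom a f k = runFrom a g k := by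
  intro k hk
  induction k with
  | zero => rfl
  | succ k ih =>
    have hval : f (a.next (runFrom a f k)) = g (a.next (runFrom a g k)) := congrFun h ⟨k, hk⟩
    simp only [runFrom]
    rw [hval, ih (by omega)]

theorem resVec_injective : Function.Injective (resVec a : (Fin n → Y) → Fin n → Y) := by
  intro f g h
  funext x
  obtain ⟨i, rfl⟩ := (a.probePerm f).surjective x
  have hprobe : a.probe f i = a.probe g i := by
    simp only [probe, a.runFrom_eq_of_resVec_eq f h i i.isLt.le]
  calc f (a.probePerm f i) = resVec a f i := rfl
    _ = g (a.probe g i) := congrFun h i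
    _ = g (a.probePerm f i) := congrArg g hprobe.symm

theorem resVec_bijective [Finite Y] :
    Function.Bijective (resVec a : (Fin n → Y) → Fin n → Y) :=
  Finite.injective_iff_bijective.1 a.resVec_injective

def relabel (σ : Equiv.Perm (Fin n)) : Optimiser n Y where
  next T := σ (a.next (T.map (Prod.map σ.symm id)))
  valid T hT hT_nodup := by
    have hfresh := a.valid (T.map (Prod.map σ.symm id)) (by simpa using hT)
      (by simpa [Function.comp_def] using hT_nodup.map σ.symm.injective)
    simpa [Function.comp_def, σ.symm_apply_eq] using hfresh

theorem relabel_next_map (σ : Equiv.Perm (Fin n)) (T : List (Fin n × Y)) :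
    (a.relabel σ).next (T.map (Prod.map σ id)) = σ (a.next T) := by
  simp only [relabel, List.map_map, Prod.map_comp_map, σ.symm_comp_self, Function.id_comp,
    Prod.map_id, List.map_id]

theorem runFrom_relabel (σ : Equiv.Perm (Fin n)) (k : ℕ) :
    runFrom (a.relabel σ) f k = (runFrom a (f ∘ σ) k).map (Prod.map σ id) := by
  induction k with
  | zero => rfl
  | succ k ih => simp [runFrom, ih, relabel_next_map]

theorem resVec_relabel (σ : Equiv.Perm (Fin n)) :
    resVec (a.relabel σ) f = resVec a (f ∘ σ) := by
  funext i
  simp [resVec, runFrom_relabel, relabel_next_map]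

theorem nonempty (hn : 0 < n) : Nonempty (Optimiser n Y) :=
  have : Nonempty (Fin n) := ⟨⟨0, hn⟩⟩
  ⟨{ next := fun T => Classical.epsilon (· ∉ T.map Prod.fst)
     valid := fun T hT _ => Classical.epsilon_spec <|
       Cardinal.exists_notMem_of_length_lt _ (by simpa using hT) }⟩

end Optimiser

section Performance

variable [Fintype Y] (P : (Fin n → Y) → ℝ)

theorem perf_eq_sum_of_comp_perm_invariant
    (hP : ∀ f (σ : Equiv.Perm (Fin n)), P (f ∘ σ) = P f)
    (M : (Fin n → Y) → ℝ) (a : Optimiser n Y) : perf P M a = ∑ R, P R * M R :=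
  calc perf P M a = ∑ f, P (resVec a f) * M (resVec a f) :=
        Finset.sum_congr rfl fun f _ => by rw [a.resVec_eq_comp_probePerm, hP]
    _ = ∑ R, P R * M R := a.resVec_bijective.sum_comp fun R => P R * M R

open Classical in
theorem perf_indicator_resVec (a : Optimiser n Y) (f : Fin n → Y) :
    perf P (fun R => if R = resVec a f then 1 else 0) a = P f := by
  simp [perf, a.resVec_injective.eq_iff]

theorem comp_perm_invariant_of_nflHolds (hn : 0 < n) (hP : NFLholds P) (f : Fin n → Y)
    (σ : Equiv.Perm (Fin n)) : P (f ∘ σ) = P f := by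
  classical
  obtain ⟨a⟩ := Optimiser.nonempty (Y := Y) hn
  have hrelabel : resVec (a.relabel σ.symm) (f ∘ σ) = resVec a f := by
    rw [Optimiser.resVec_relabel, Function.comp_assoc, σ.self_comp_symm, Function.comp_id]
  calc P (f ∘ σ) = perf P (fun R => if R = resVec a f then 1 else 0) (a.relabel σ.symm) := by
        rw [← hrelabel, perf_indicator_resVec]
    _ = perf P (fun R => if R = resVec a f then 1 else 0) a :=
        hP _ (fun R => by split_ifs <;> norm_num) _ _
    _ = P f := perf_indicator_resVec P a f

theorem nflHolds_iff_comp_perm_invariant (hn : 0 < n) :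
    NFLholds P ↔ ∀ f (σ : Equiv.Perm (Fin n)), P (f ∘ σ) = P f :=
  ⟨comp_perm_invariant_of_nflHolds P hn, fun hP M _ a b => by
    rw [perf_eq_sum_of_comp_perm_invariant P hP, perf_eq_sum_of_comp_perm_invariant P hP]⟩

end Performance

theorem uniformOn_comp_perm_invariant_iff_cup [Fintype Y] [DecidableEq Y]
    (F : Finset (Fin n → Y)) :
    (∀ f (σ : Equiv.Perm (Fin n)), uniformOn F (f ∘ σ) = uniformOn F f) ↔ Cup F := by
  constructor
  · intro hF f hf σ
    by_contra hfσ
    have hcard : (F.card : ℝ) ≠ 0 := Nat.cast_ne_zero.2 (Finset.card_ne_zero_of_mem hf)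
    exact hcard (by simpa [uniformOn, hf, hfσ] using (hF f σ.symm).symm)
  · intro hF f σ
    have hmem : f ∘ σ ∈ F ↔ f ∈ F :=
      ⟨fun h => by simpa [Function.comp_assoc] using hF _ h σ,
        fun h => by simpa using hF f h σ.symm⟩
    simp only [uniformOn, hmem]

theorem nfl_uniformOn_iff_cup_general {n : ℕ} {Y : Type*} [Fintype Y] [DecidableEq Y]
    (hn : 1 ≤ n) (F : Finset (Fin n → Y)) :
    NFLholds (uniformOn F) ↔ Cup F := by
  rw [nflHolds_iff_comp_perm_invariant _ hn, uniformOn_comp_perm_invariant_iff_cup]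

theorem nfl_uniformOn_iff_cup {n : ℕ} {Y : Type*} [Fintype Y] [DecidableEq Y]
    (hn : 1 ≤ n) (hY : 2 ≤ Fintype.card Y)
    (F : Finset (Fin n → Y)) (hF : F.Nonempty) :
    NFLholds (uniformOn F) ↔ Cup F :=
  nfl_uniformOn_iff_cup_general hn F

end NFL
end

section
/- For any two optimisers a and b, the set of result vectors they can produce is the same: {R ∈ Y^n : T^y(a,f) = R for some f ∈ Y^X} = {R ∈ Y^n : T^y(b,f) = R for some f ∈ Y^X}. -/
namespace NFL

variable {n : ℕ} {Y : Type*}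

def visited (a : Optimiser n Y) (f : Fin n → Y) (k : ℕ) : List (Fin n) :=
  (runFrom a f k).map Prod.fst

section Run

variable (a : Optimiser n Y) (f : Fin n → Y)

lemma length_runFrom (k : ℕ) : (runFrom a f k).length = k := by
  induction k with
  | zero => rfl
  | succ k ih => simp [runFrom, ih]

lemma visited_succ (k : ℕ) :
    visited a f (k + 1) = visited a f k ++ [a.next (runFrom a f k)] := by
  simp [visited, runFrom]

lemma next_not_mem_visited_and_nodup {k : ℕ} (hk : k < n) :
    a.next (runFrom a f k) ∉ visited a f k ∧ (visited a f k).Nodup := by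
  induction k with
  | zero => simp [visited, runFrom]
  | succ k ih =>
    obtain ⟨hfresh, hnodup⟩ := ih (by omega)
    have hnodup' : (visited a f (k + 1)).Nodup := by
      rw [visited_succ, List.nodup_append]
      simpa using ⟨hnodup, fun x hx hxk => hfresh (hxk ▸ hx)⟩
    exact ⟨a.valid _ (by rw [length_runFrom]; exact hk) hnodup', hnodup'⟩

lemma next_not_mem_visited {k : ℕ} (hk : k < n) :
    a.next (runFrom a f k) ∉ visited a f k :=
  (next_not_mem_visited_and_nodup a f hk).1

lemma visited_prefix {i k : ℕ} (h : i ≤ k) : visited a f i <+: visited a f k := by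
  induction k, h using Nat.le_induction with
  | base => exact List.prefix_rfl
  | succ k _ ih => exact ih.trans (visited_succ a f k ▸ List.prefix_append _ _)

lemma next_mem_visited {i k : ℕ} (h : i < k) : a.next (runFrom a f i) ∈ visited a f k :=
  (visited_prefix a f h).subset (by simp [visited_succ])

lemma runFrom_congr {g : Fin n → Y} {k : ℕ} (h : ∀ x ∈ visited a f k, g x = f x) :
    runFrom a g k = runFrom a f k := by
  induction k with
  | zero => rfl
  | succ k ih =>
    have hrun := ih fun x hx => h x ((visited_prefix a f k.le_succ).subset hx)
    have hnext := h _ (next_mem_visited a f k.lt_succ_self)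
    simp only [runFrom, hrun, hnext]

end Run

/- Prescribe the result vector one entry at a time: the point probed at step `k` has not been
visited before, so redefining the target function there does not change the first `k` steps. -/
lemma exists_resVec_eq_of_lt (a : Optimiser n Y) (R : Fin n → Y) :
    ∀ k ≤ n, ∃ f : Fin n → Y, ∀ i : Fin n, (i : ℕ) < k → resVec a f i = R i := by
  classical
  intro k
  induction k with
  | zero => exact fun _ => ⟨R, fun i hi => absurd hi (Nat.not_lt_zero _)⟩
  | succ k ih =>
    intro hk
    obtain ⟨f, hf⟩ := ih (by omega)
    set p := a.next (runFrom a f k)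
    set g := Function.update f p (R ⟨k, hk⟩)
    have hfresh : p ∉ visited a f k := next_not_mem_visited a f hk
    have hrun : ∀ i ≤ k, runFrom a g i = runFrom a f i := fun i hi =>
      runFrom_congr a f fun x hx => Function.update_of_ne
        (fun hxp : x = p => hfresh (hxp ▸ (visited_prefix a f hi).subset hx)) _ _
    refine ⟨g, fun i hi => ?_⟩
    rw [resVec, hrun i (by omega)]
    rcases Nat.lt_succ_iff_lt_or_eq.mp hi with hlt | rfl
    · refine (Function.update_of_ne ?_ _ _).trans (hf i hlt)
      exact fun h : a.next (runFrom a f i) = p => hfresh (h ▸ next_mem_visited a f hlt)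
    · exact Function.update_self _ _ _

lemma resVec_surjective (a : Optimiser n Y) : Function.Surjective (resVec a) := fun R =>
  (exists_resVec_eq_of_lt a R n le_rfl).imp fun _ hf => funext fun i => hf i i.2

theorem resVec_range_eq_general {n : ℕ} {Y : Type*} (a b : Optimiser n Y) :
    {R : Fin n → Y | ∃ f : Fin n → Y, resVec a f = R} =
      {R : Fin n → Y | ∃ f : Fin n → Y, resVec b f = R} :=
  (resVec_surjective a).range_eq.trans (resVec_surjective b).range_eq.symm

theorem resVec_range_eq {n : ℕ} {Y : Type*} [Fintype Y] [DecidableEq Y]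
    (hn : 1 ≤ n) (hY : 2 ≤ Fintype.card Y) (a b : Optimiser n Y) :
    {R : Fin n → Y | ∃ f : Fin n → Y, resVec a f = R} =
      {R : Fin n → Y | ∃ f : Fin n → Y, resVec b f = R} :=
  resVec_range_eq_general a b

end NFL
end

section
/- If a problem distribution P is not block uniform, then there exist two non-adaptive optimisers e and e' and a result vector R ∈ Y^n such that P_e(R) ≠ P_{e'}(R); consequently there is free lunch for a non-adaptive optimiser under some performance measure. -/
namespace NFL

variable {n : ℕ} {Y : Type*}

/-!
Two functions `f`, `g` with the same histogram differ by a permutation `σ` of the search space,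
`g ∘ σ = f`. The non-adaptive optimiser probing in the order `σ` turns a target `h` into the
result vector `h ∘ σ`, so it produces the result vector `f` exactly on `g`, while probing in the
identity order produces it exactly on `f`. If `P f ≠ P g`, these two optimisers are told apart
by the probability of `f`, i.e. by the performance measure that is the indicator of `f`.
-/

theorem exists_perm_comp_eq_of_histogram_eq [DecidableEq Y] {f g : Fin n → Y}
    (h : histogram f = histogram g) : ∃ σ : Equiv.Perm (Fin n), g ∘ σ = f := by
  have hfibre : ∀ y, Fintype.card {x // f x = y} = Fintype.card {x // g x = y} := fun y => by
    simpa only [Fintype.card_subtype, histogram] using congrFun h y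
  exact ⟨Equiv.ofFiberEquiv fun y => Fintype.equivOfCardEq (hfibre y),
    funext (Equiv.ofFiberEquiv_map _)⟩

theorem perf_ite_eq_resProb [Fintype Y] [DecidableEq Y] (P : (Fin n → Y) → ℝ) (a : Optimiser n Y)
    (R : Fin n → Y) : perf P (fun R' => if R' = R then 1 else 0) a = resProb P a R := by
  simp only [perf, resProb, Finset.sum_filter, mul_ite, mul_one, mul_zero]

namespace Optimiser

def unvisitedRanks (σ : Equiv.Perm (Fin n)) (T : List (Fin n × Y)) : Finset (Fin n) :=
  {m | σ m ∉ T.map Prod.fst}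

theorem unvisitedRanks_nonempty (σ : Equiv.Perm (Fin n)) {T : List (Fin n × Y)}
    (hT : T.length < n) : (unvisitedRanks σ T).Nonempty := by
  have hcard : (T.map Prod.fst).toFinset.card < (Finset.univ : Finset (Fin n)).card := by
    simpa using ((T.map Prod.fst).toFinset_card_le).trans_lt (by simpa using hT)
  obtain ⟨x, -, hx⟩ := Finset.exists_mem_notMem_of_card_lt_card hcard
  exact ⟨σ.symm x, by simpa [unvisitedRanks] using hx⟩

/-- `next` must be defined on every trace, not only on those the optimiser produces itself, so it
probes the first point of the enumeration `σ 0, σ 1, …` that is not yet in the trace; the value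
`σ 0` on full traces is junk. -/
def ofPerm_s7 [NeZero n] (σ : Equiv.Perm (Fin n)) : Optimiser n Y where
  next T := if h : (unvisitedRanks σ T).Nonempty then σ ((unvisitedRanks σ T).min' h) else σ 0
  valid T hT _ := by
    have h := unvisitedRanks_nonempty σ hT
    rw [dif_pos h]
    simpa [unvisitedRanks] using (unvisitedRanks σ T).min'_mem h

variable [NeZero n] (σ : Equiv.Perm (Fin n))

theorem ofPerm_next_of_visited {T : List (Fin n × Y)} {k : ℕ} (hk : k < n)
    (hT : ∀ i : Fin n, σ i ∈ T.map Prod.fst ↔ (i : ℕ) < k) :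
    (ofPerm_s7 σ).next T = σ ⟨k, hk⟩ := by
  have hranks : unvisitedRanks σ T = ({m | k ≤ (m : ℕ)} : Finset (Fin n)) := by
    ext m
    simp [unvisitedRanks, hT]
  have hne : (unvisitedRanks σ T).Nonempty := ⟨⟨k, hk⟩, by simp [hranks]⟩
  have hmin : (unvisitedRanks σ T).min' hne = ⟨k, hk⟩ := by
    rw [Finset.min'_eq_iff]
    simp [hranks, Fin.le_def]
  simp only [ofPerm_s7]
  rw [dif_pos hne, hmin]

theorem mem_runFrom_ofPerm (f : Fin n → Y) {k : ℕ} (hk : k ≤ n) (i : Fin n) :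
    σ i ∈ (runFrom (ofPerm_s7 σ) f k).map Prod.fst ↔ (i : ℕ) < k := by
  induction k generalizing i with
  | zero => simp [runFrom]
  | succ k ih =>
    have hnext := ofPerm_next_of_visited σ hk (ih (Nat.le_of_succ_le hk))
    simp only [runFrom, List.map_append, List.mem_append, ih (Nat.le_of_succ_le hk), hnext,
      List.map_cons, List.map_nil, List.mem_singleton, σ.injective.eq_iff, Fin.ext_iff]
    omega

theorem ofPerm_next_runFrom (f : Fin n → Y) (i : Fin n) :
    (ofPerm_s7 σ).next (runFrom (ofPerm_s7 σ) f i) = σ i :=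
  ofPerm_next_of_visited σ i.isLt (mem_runFrom_ofPerm σ f i.isLt.le)

theorem nonAdaptive_ofPerm : NonAdaptive (ofPerm_s7 (Y := Y) σ) :=
  ⟨σ, ofPerm_next_runFrom σ⟩

theorem resVec_ofPerm (f : Fin n → Y) : resVec (ofPerm_s7 σ) f = f ∘ σ :=
  funext fun i => congrArg f (ofPerm_next_runFrom σ f i)

theorem resProb_ofPerm [Fintype Y] [DecidableEq Y] (P : (Fin n → Y) → ℝ) (R : Fin n → Y) :
    resProb P (ofPerm_s7 σ) R = P (R ∘ σ.symm) := by
  have hfibre : ({f | resVec (ofPerm_s7 σ) f = R} : Finset (Fin n → Y)) = {R ∘ σ.symm} := by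
    ext f
    simp only [Finset.mem_filter, Finset.mem_univ, true_and, Finset.mem_singleton,
      resVec_ofPerm, Equiv.eq_comp_symm]
  rw [resProb, hfibre, Finset.sum_singleton]

end Optimiser

theorem not_blockUniform_free_lunch_general {n : ℕ} {Y : Type*} [Fintype Y] [DecidableEq Y]
    (P : (Fin n → Y) → ℝ) (hnbu : ¬ BlockUniform P) :
    ∃ e e' : Optimiser n Y, NonAdaptive e ∧ NonAdaptive e' ∧
      (∃ R : Fin n → Y, resProb P e R ≠ resProb P e' R) ∧
      ∃ M : (Fin n → Y) → ℝ, (∀ R, 0 ≤ M R) ∧ perf P M e ≠ perf P M e' := by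
  obtain ⟨f, g, hfg, hPfg⟩ : ∃ f g : Fin n → Y, histogram f = histogram g ∧ P f ≠ P g := by
    simpa [BlockUniform] using hnbu
  have : NeZero n := ⟨by rintro rfl; exact hPfg (congrArg P (Subsingleton.elim f g))⟩
  obtain ⟨σ, hσ⟩ := exists_perm_comp_eq_of_histogram_eq hfg
  have hg : f ∘ σ.symm = g := by
    rw [← hσ, Function.comp_assoc, Equiv.self_comp_symm, Function.comp_id]
  have hR : resProb P (Optimiser.ofPerm_s7 1) f ≠ resProb P (Optimiser.ofPerm_s7 σ) f := by
    rw [Optimiser.resProb_ofPerm, Optimiser.resProb_ofPerm, hg]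
    exact hPfg
  refine ⟨Optimiser.ofPerm_s7 1, Optimiser.ofPerm_s7 σ, Optimiser.nonAdaptive_ofPerm 1,
    Optimiser.nonAdaptive_ofPerm σ, ⟨f, hR⟩,
    fun R => if R = f then 1 else 0, fun R => by positivity, ?_⟩
  rwa [perf_ite_eq_resProb, perf_ite_eq_resProb]

theorem not_blockUniform_free_lunch {n : ℕ} {Y : Type*} [Fintype Y] [DecidableEq Y]
    (hn : 1 ≤ n) (hY : 2 ≤ Fintype.card Y)
    (P : (Fin n → Y) → ℝ) (hP : IsProbDist P) (hnbu : ¬ BlockUniform P) :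
    ∃ e e' : Optimiser n Y, NonAdaptive e ∧ NonAdaptive e' ∧
      (∃ R : Fin n → Y, resProb P e R ≠ resProb P e' R) ∧
      ∃ M : (Fin n → Y) → ℝ, (∀ R, 0 ≤ M R) ∧ perf P M e ≠ perf P M e' :=
  not_blockUniform_free_lunch_general P hnbu

end NFL
end
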